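/- arXiv:2312.04112 — 9 statements merged into one kernel-verified Lean document; each statement's English description precedes it below -/
import Mathlib

section
/- Under hypothesis (H1) and assuming that the break-even concentrations λ_u, λ_v, λ_b exist, for every S > 0 with ψ(S) ≠ 0 and ψ(S) ≠ φ(S), one has U(S) > 0 and V(S) > 0 if and only if S belongs to the interval I (that is, λ_u < S < λ_v in the case λ_u < λ_v, and λ_v < S < min(λ_u, λ_b) in the case λ_v ≤ λ_u). -/
lemma UV_pos_key (a b P Q : ℝ) (ha : 0 < a) (hb : 0 < b) (hQ : Q ≠ 0) (hQP : Q ≠ P) :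
    (0 < P * (Q - b) / (a * (Q - P)) ∧ 0 < -(P^2) * (Q - b) / (a * (Q - P) * Q)) ↔
    ((0 < P ∧ Q < 0) ∨ (P < 0 ∧ 0 < Q ∧ Q < b)) := by
  constructor
  · rintro ⟨hU, hV⟩
    rcases div_pos_iff.mp hU with ⟨h1, h2⟩ | ⟨h1, h2⟩ <;>
      rcases div_pos_iff.mp hV with ⟨h3, h4⟩ | ⟨h3, h4⟩
    · -- (+,+),(+,+) : right disjunct
      have hQb : Q < b := by by_contra h; push_neg at h; nlinarith [sq_nonneg P]
      have hP : P < 0 := by by_contra h; push_neg at h; nlinarith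
      have hQpos : 0 < Q := by by_contra h; push_neg at h; nlinarith
      exact Or.inr ⟨hP, hQpos, hQb⟩
    · -- (+,+),(-,-) : impossible
      exfalso
      have hQneg : Q < 0 := by by_contra h; push_neg at h; nlinarith
      nlinarith [sq_nonneg P]
    · -- (-,-),(+,+) : left disjunct
      have hQneg : Q < 0 := by by_contra h; push_neg at h; nlinarith
      have hQb : Q - b < 0 := by nlinarith
      have hP : 0 < P := by by_contra h; push_neg at h; nlinarith
      exact Or.inl ⟨hP, hQneg⟩
    · -- (-,-),(-,-) : impossible
      exfalso
      have hQpos : 0 < Q := by by_contra h; push_neg at h; nlinarith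
      have hQb : b < Q := by by_contra h; push_neg at h; nlinarith [sq_nonneg P]
      have hd : Q - P < 0 := by by_contra h; push_neg at h; nlinarith
      have hPn : P < 0 := by by_contra h; push_neg at h; nlinarith
      linarith
  · rintro (⟨hP, hQ0⟩ | ⟨hP, hQ0, hQb⟩)
    · have hQbneg : Q - b < 0 := by linarith
      have hQPneg : Q - P < 0 := by linarith
      constructor
      · exact div_pos_iff.mpr (Or.inr ⟨mul_neg_of_pos_of_neg hP hQbneg,
          mul_neg_of_pos_of_neg ha hQPneg⟩)
      · refine div_pos_iff.mpr (Or.inl ⟨?_, ?_⟩)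
        · nlinarith [mul_pos hP hP]
        · nlinarith [mul_pos_of_neg_of_neg hQPneg hQ0]
    · have hQbneg : Q - b < 0 := by linarith
      have hQPpos : 0 < Q - P := by linarith
      constructor
      · exact div_pos_iff.mpr (Or.inl ⟨mul_pos_of_neg_of_neg hP hQbneg,
          mul_pos ha hQPpos⟩)
      · refine div_pos_iff.mpr (Or.inl ⟨?_, ?_⟩)
        · nlinarith [mul_pos_of_neg_of_neg hP hP]
        · positivity


/-- Under (H1) and existence of the break-even concentrations
`lu, lv, lb`, for every `S > 0` with `psi S ≠ 0` and `psi S ≠ phi S`, one has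
`U S > 0 ∧ V S > 0` iff `S` belongs to the interval `I`. -/

theorem positivity_of_UV_iff_mem_I
    (f g : ℝ → ℝ) (D Sin a b yu yv Du Dv : ℝ)
    (hD : 0 < D) (hSin : 0 < Sin) (ha : 0 < a) (hb : 0 < b)
    (hyu : 0 < yu) (hyv : 0 < yv) (hDu : 0 < Du) (hDv : 0 < Dv)
    (hfC : ContDiffOn ℝ 1 f (Set.Ici 0)) (hgC : ContDiffOn ℝ 1 g (Set.Ici 0))
    (hf0 : f 0 = 0) (hg0 : g 0 = 0)
    (hf' : ∀ S > (0:ℝ), 0 < deriv f S) (hg' : ∀ S > (0:ℝ), 0 < deriv g S)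
    (phi psi U V : ℝ → ℝ)
    (hphi : ∀ S, phi S = f S - Du) (hpsi : ∀ S, psi S = g S - Dv)
    (hU : ∀ S, U S = phi S * (psi S - b) / (a * (psi S - phi S)))
    (hV : ∀ S, V S = -((phi S)^2) * (psi S - b) / (a * (psi S - phi S) * psi S))
    (lu lv lb : ℝ)
    (hlu0 : 0 < lu) (hlu : f lu = Du)
    (hlv0 : 0 < lv) (hlv : g lv = Dv)
    (hlb0 : 0 < lb) (hlb : g lb = Dv + b)
    (S : ℝ) (hS : 0 < S) (hpsiS : psi S ≠ 0) (hpsiphi : psi S ≠ phi S) :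
    (0 < U S ∧ 0 < V S) ↔
      (if lu < lv then lu < S ∧ S < lv else lv < S ∧ S < min lu lb) := by
  -- strict monotonicity of f and g on [0,∞)
  have hfm : StrictMonoOn f (Set.Ici 0) := by
    apply strictMonoOn_of_deriv_pos (convex_Ici 0) hfC.continuousOn
    intro x hx
    rw [interior_Ici] at hx
    exact hf' x hx
  have hgm : StrictMonoOn g (Set.Ici 0) := by
    apply strictMonoOn_of_deriv_pos (convex_Ici 0) hgC.continuousOn
    intro x hx
    rw [interior_Ici] at hx
    exact hg' x hx
  have hSmem : S ∈ Set.Ici (0:ℝ) := le_of_lt hS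
  -- sign translations
  have hPpos : 0 < phi S ↔ lu < S := by
    rw [hphi, sub_pos, ← hlu]; exact hfm.lt_iff_lt (le_of_lt hlu0) hSmem
  have hPneg : phi S < 0 ↔ S < lu := by
    rw [hphi, sub_neg, ← hlu]; exact hfm.lt_iff_lt hSmem (le_of_lt hlu0)
  have hQpos : 0 < psi S ↔ lv < S := by
    rw [hpsi, sub_pos, ← hlv]; exact hgm.lt_iff_lt (le_of_lt hlv0) hSmem
  have hQneg : psi S < 0 ↔ S < lv := by
    rw [hpsi, sub_neg, ← hlv]; exact hgm.lt_iff_lt hSmem (le_of_lt hlv0)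
  have hQb : psi S < b ↔ S < lb := by
    rw [hpsi, sub_lt_iff_lt_add']
    rw [← hlb]
    exact hgm.lt_iff_lt hSmem (le_of_lt hlb0)
  rw [hU S, hV S, UV_pos_key a b (phi S) (psi S) ha hb hpsiS hpsiphi,
    hPpos, hPneg, hQpos, hQneg, hQb]
  constructor
  · rintro (⟨h1, h2⟩ | ⟨h1, h2, h3⟩)
    · rw [if_pos (lt_trans h1 h2)]; exact ⟨h1, h2⟩
    · rw [if_neg (by intro h; linarith)]
      exact ⟨h2, lt_min h1 h3⟩
  · intro h
    by_cases hc : lu < lv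
    · rw [if_pos hc] at h; exact Or.inl h
    · rw [if_neg hc] at h
      exact Or.inr ⟨lt_of_lt_of_le h.2 (min_le_left _ _), h.1,
        lt_of_lt_of_le h.2 (min_le_right _ _)⟩
end

section
/- The washout point E0 = (S_in, 0, 0) is an equilibrium of the model, the Jacobian matrix of the model at E0 is J0 = [[−D, −f(S_in)/y_u, −g(S_in)/y_v], [0, f(S_in) − D_u, b], [0, 0, g(S_in) − D_v − b]], and every complex eigenvalue of J0 has negative real part if and only if f(S_in) < D_u and g(S_in) < D_v + b (equivalently, S_in < min(λ_u, λ_b) when λ_u and λ_b exist). -/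
/-!
The Jacobian at the washout point is upper triangular: the derivatives of `f` and `g` only
enter multiplied by `u` or `v`, which vanish there, and the flocculation term `a (u + v) u` is
quadratic in `u`. Hence its eigenvalues are its diagonal entries `-D`, `f Sin - Du` and
`g Sin - Dv - b`. Since `f` and `g` are strictly increasing, `f Sin < Du = f lu` and
`g Sin < Dv + b = g lb` amount to `Sin < lu` and `Sin < lb`.
-/

open Matrix Polynomial

theorem Matrix.spectrum_of_isUpperTriangular {K n : Type*} [Field K] [Fintype n] [DecidableEq n]
    [LinearOrder n] {M : Matrix n n K} (hM : M.IsUpperTriangular) :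
    spectrum K M = Set.range fun i => M i i := by
  ext r
  rw [mem_spectrum_iff_isRoot_charpoly, charpoly_of_isUpperTriangular M hM, IsRoot.def,
    eval_prod, Finset.prod_eq_zero_iff]
  simp [sub_eq_zero, eq_comm]

theorem Matrix.forall_spectrum_re_neg_iff_of_isUpperTriangular {n : Type*} [Fintype n]
    [DecidableEq n] [LinearOrder n] {A : Matrix n n ℝ} (hA : A.IsUpperTriangular) :
    (∀ μ ∈ spectrum ℂ (A.map (algebraMap ℝ ℂ)), μ.re < 0) ↔ ∀ i, A i i < 0 := by
  rw [spectrum_of_isUpperTriangular (hA.map (algebraMap ℝ ℂ))]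
  simp

theorem strictMonoOn_Ici_of_deriv_pos {f : ℝ → ℝ} {c : ℝ} (hf : ContinuousOn f (Set.Ici c))
    (hf' : ∀ x > c, 0 < deriv f x) : StrictMonoOn f (Set.Ici c) :=
  strictMonoOn_of_deriv_pos (convex_Ici c) hf (by simpa using hf')

noncomputable def chemostatField (f g : ℝ → ℝ) (D Sin a b yu yv Du Dv : ℝ) (x : Fin 3 → ℝ) :
    Fin 3 → ℝ :=
  ![D * (Sin - x 0) - (1/yu) * f (x 0) * x 1 - (1/yv) * g (x 0) * x 2,
    (f (x 0) - Du) * x 1 - a * (x 1 + x 2) * x 1 + b * x 2,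
    (g (x 0) - Dv) * x 2 + a * (x 1 + x 2) * x 1 - b * x 2]

noncomputable def washoutJacobian (f g : ℝ → ℝ) (D Sin b yu yv Du Dv : ℝ) :
    Matrix (Fin 3) (Fin 3) ℝ :=
  !![-D, -(f Sin)/yu, -(g Sin)/yv;
     0, f Sin - Du, b;
     0, 0, g Sin - Dv - b]

section Washout

variable {f g : ℝ → ℝ} {D Sin a b yu yv Du Dv : ℝ}

theorem chemostatField_washout : chemostatField f g D Sin a b yu yv Du Dv ![Sin, 0, 0] = 0 := by
  ext i
  fin_cases i <;> simp [chemostatField]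

theorem washoutJacobian_isUpperTriangular :
    (washoutJacobian f g D Sin b yu yv Du Dv).IsUpperTriangular := by
  intro i j hij
  fin_cases i <;> fin_cases j <;> simp [washoutJacobian] at hij ⊢

theorem washoutJacobian_diag_neg_iff (hD : 0 < D) :
    (∀ i, washoutJacobian f g D Sin b yu yv Du Dv i i < 0) ↔ f Sin < Du ∧ g Sin < Dv + b := by
  simp [Fin.forall_fin_succ, washoutJacobian, hD, sub_lt_iff_lt_add']

theorem hasFDerivAt_chemostatField_washout
    (hf : DifferentiableAt ℝ f Sin) (hg : DifferentiableAt ℝ g Sin) :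
    HasFDerivAt (chemostatField f g D Sin a b yu yv Du Dv)
      (mulVecLin (washoutJacobian f g D Sin b yu yv Du Dv)).toContinuousLinearMap
      ![Sin, 0, 0] := by
  set E₀ : Fin 3 → ℝ := ![Sin, 0, 0]
  have hx (i : Fin 3) :
      HasFDerivAt (fun x : Fin 3 → ℝ => x i)
        (ContinuousLinearMap.proj (R := ℝ) (φ := fun _ : Fin 3 => ℝ) i) E₀ :=
    hasFDerivAt_apply i E₀
  have hfx := hf.hasDerivAt.comp_hasFDerivAt_of_eq E₀ (hx 0) rfl
  have hgx := hg.hasDerivAt.comp_hasFDerivAt_of_eq E₀ (hx 0) rfl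
  refine hasFDerivAt_pi'' fun i => ?_
  fin_cases i
  · refine (((((hasFDerivAt_const Sin E₀).sub (hx 0)).const_mul D).sub
      ((hfx.const_mul (1/yu)).mul (hx 1))).sub ((hgx.const_mul (1/yv)).mul (hx 2))).congr_fderiv ?_
    ext v
    simp [E₀, washoutJacobian, dotProduct, Fin.sum_univ_three]
    ring
  · refine ((((hfx.sub (hasFDerivAt_const Du E₀)).mul (hx 1)).sub
      ((((hx 1).add (hx 2)).const_mul a).mul (hx 1))).add ((hx 2).const_mul b)).congr_fderiv ?_
    ext v
    simp [E₀, washoutJacobian, dotProduct, Fin.sum_univ_three]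
  · refine ((((hgx.sub (hasFDerivAt_const Dv E₀)).mul (hx 2)).add
      ((((hx 1).add (hx 2)).const_mul a).mul (hx 1))).sub ((hx 2).const_mul b)).congr_fderiv ?_
    ext v
    simp [E₀, washoutJacobian, dotProduct, Fin.sum_univ_three]
    ring

end Washout

theorem washout_equilibrium_jacobian_and_stability_general
    (f g : ℝ → ℝ) (D Sin a b yu yv Du Dv : ℝ)
    (hD : 0 < D) (hSin : 0 < Sin)
    (hfC : ContDiffOn ℝ 1 f (Set.Ici 0)) (hgC : ContDiffOn ℝ 1 g (Set.Ici 0))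
    (hf' : ∀ S > (0:ℝ), 0 < deriv f S) (hg' : ∀ S > (0:ℝ), 0 < deriv g S)
    (F : (Fin 3 → ℝ) → (Fin 3 → ℝ))
    (hF : ∀ x, F x =
      ![D * (Sin - x 0) - (1/yu) * f (x 0) * x 1 - (1/yv) * g (x 0) * x 2,
        (f (x 0) - Du) * x 1 - a * (x 1 + x 2) * x 1 + b * x 2,
        (g (x 0) - Dv) * x 2 + a * (x 1 + x 2) * x 1 - b * x 2])
    (J0 : Matrix (Fin 3) (Fin 3) ℝ)
    (hJ0 : J0 = !![-D, -(f Sin)/yu, -(g Sin)/yv;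
                   0, f Sin - Du, b;
                   0, 0, g Sin - Dv - b]) :
    F ![Sin, 0, 0] = 0 ∧
    HasFDerivAt F (Matrix.mulVecLin J0).toContinuousLinearMap ![Sin, 0, 0] ∧
    ((∀ μ : ℂ, μ ∈ spectrum ℂ (J0.map (algebraMap ℝ ℂ)) → μ.re < 0) ↔
      (f Sin < Du ∧ g Sin < Dv + b)) ∧
    (∀ lu lb : ℝ, 0 < lu → f lu = Du → 0 < lb → g lb = Dv + b →
      ((f Sin < Du ∧ g Sin < Dv + b) ↔ Sin < min lu lb)) := by
  obtain rfl : F = chemostatField f g D Sin a b yu yv Du Dv := funext hF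
  obtain rfl : J0 = washoutJacobian f g D Sin b yu yv Du Dv := hJ0
  have hfd : DifferentiableAt ℝ f Sin :=
    (hfC.contDiffAt (Ici_mem_nhds hSin)).differentiableAt one_ne_zero
  have hgd : DifferentiableAt ℝ g Sin :=
    (hgC.contDiffAt (Ici_mem_nhds hSin)).differentiableAt one_ne_zero
  refine ⟨chemostatField_washout, hasFDerivAt_chemostatField_washout hfd hgd, ?_, ?_⟩
  · rw [forall_spectrum_re_neg_iff_of_isUpperTriangular washoutJacobian_isUpperTriangular,
      washoutJacobian_diag_neg_iff hD]
  · intro lu lb hlu hflu hlb hglb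
    rw [lt_min_iff, ← hflu, ← hglb,
      (strictMonoOn_Ici_of_deriv_pos hfC.continuousOn hf').lt_iff_lt hSin.le hlu.le,
      (strictMonoOn_Ici_of_deriv_pos hgC.continuousOn hg').lt_iff_lt hSin.le hlb.le]

/-- `E0 = (Sin, 0, 0)` is an equilibrium, the Jacobian of the model
at `E0` is the matrix `J0`, and all complex eigenvalues of `J0` have negative
real part iff `f Sin < Du` and `g Sin < Dv + b` (equivalently `Sin < min lu lb`
when the break-even concentrations `lu`, `lb` exist). -/
theorem washout_equilibrium_jacobian_and_stability
    (f g : ℝ → ℝ) (D Sin a b yu yv Du Dv : ℝ)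
    (hD : 0 < D) (hSin : 0 < Sin) (ha : 0 < a) (hb : 0 < b)
    (hyu : 0 < yu) (hyv : 0 < yv) (hDu : 0 < Du) (hDv : 0 < Dv)
    (hfC : ContDiffOn ℝ 1 f (Set.Ici 0)) (hgC : ContDiffOn ℝ 1 g (Set.Ici 0))
    (hf0 : f 0 = 0) (hg0 : g 0 = 0)
    (hf' : ∀ S > (0:ℝ), 0 < deriv f S) (hg' : ∀ S > (0:ℝ), 0 < deriv g S)
    (F : (Fin 3 → ℝ) → (Fin 3 → ℝ))
    (hF : ∀ x, F x =
      ![D * (Sin - x 0) - (1/yu) * f (x 0) * x 1 - (1/yv) * g (x 0) * x 2,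
        (f (x 0) - Du) * x 1 - a * (x 1 + x 2) * x 1 + b * x 2,
        (g (x 0) - Dv) * x 2 + a * (x 1 + x 2) * x 1 - b * x 2])
    (J0 : Matrix (Fin 3) (Fin 3) ℝ)
    (hJ0 : J0 = !![-D, -(f Sin)/yu, -(g Sin)/yv;
                   0, f Sin - Du, b;
                   0, 0, g Sin - Dv - b]) :
    F ![Sin, 0, 0] = 0 ∧
    HasFDerivAt F (Matrix.mulVecLin J0).toContinuousLinearMap ![Sin, 0, 0] ∧
    ((∀ μ : ℂ, μ ∈ spectrum ℂ (J0.map (algebraMap ℝ ℂ)) → μ.re < 0) ↔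
      (f Sin < Du ∧ g Sin < Dv + b)) ∧
    (∀ lu lb : ℝ, 0 < lu → f lu = Du → 0 < lb → g lb = Dv + b →
      ((f Sin < Du ∧ g Sin < Dv + b) ↔ Sin < min lu lb)) :=
  washout_equilibrium_jacobian_and_stability_general f g D Sin a b yu yv Du Dv hD hSin hfC hgC hf'
    hg' F hF J0 hJ0
end

section
/- Under hypothesis (H1), if λ_u and λ_v exist and λ_u < λ_v, then H(S) tends to +∞ as S tends to λ_v from the left (i.e., along S ∈ (λ_u, λ_v) with S → λ_v). -/
open Filter Set Topology

/-- Under (H1), if `lu` and `lv` exist and `lu < lv`, then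
`H S → +∞` as `S → lv` from the left along `(lu, lv)`. -/
theorem H_tendsto_atTop_left_of_lv
    (f g : ℝ → ℝ) (D Sin a b yu yv Du Dv : ℝ)
    (hD : 0 < D) (hSin : 0 < Sin) (ha : 0 < a) (hb : 0 < b)
    (hyu : 0 < yu) (hyv : 0 < yv) (hDu : 0 < Du) (hDv : 0 < Dv)
    (hfC : ContDiffOn ℝ 1 f (Set.Ici 0)) (hgC : ContDiffOn ℝ 1 g (Set.Ici 0))
    (hf0 : f 0 = 0) (hg0 : g 0 = 0)
    (hf' : ∀ S > (0:ℝ), 0 < deriv f S) (hg' : ∀ S > (0:ℝ), 0 < deriv g S)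
    (phi psi U V H : ℝ → ℝ)
    (hphi : ∀ S, phi S = f S - Du) (hpsi : ∀ S, psi S = g S - Dv)
    (hU : ∀ S, U S = phi S * (psi S - b) / (a * (psi S - phi S)))
    (hV : ∀ S, V S = -((phi S)^2) * (psi S - b) / (a * (psi S - phi S) * psi S))
    (hH : ∀ S, H S = (1/yu) * f S * U S + (1/yv) * g S * V S)
    (lu lv : ℝ)
    (hlu0 : 0 < lu) (hlu : f lu = Du)
    (hlv0 : 0 < lv) (hlv : g lv = Dv)
    (hluv : lu < lv) :
    Filter.Tendsto H (nhdsWithin lv (Set.Ioo lu lv)) Filter.atTop := by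
  have hfc : ContinuousOn f (Set.Ici 0) := hfC.continuousOn
  have hgc : ContinuousOn g (Set.Ici 0) := hgC.continuousOn
  have hfm : StrictMonoOn f (Set.Ici 0) := by
    apply strictMonoOn_of_deriv_pos (convex_Ici 0) hfc
    intro x hx
    rw [interior_Ici] at hx
    exact hf' x hx
  have hgm : StrictMonoOn g (Set.Ici 0) := by
    apply strictMonoOn_of_deriv_pos (convex_Ici 0) hgc
    intro x hx
    rw [interior_Ici] at hx
    exact hg' x hx
  have hIci : Set.Ici (0:ℝ) ∈ nhds lv := Ici_mem_nhds hlv0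
  have hfct : ContinuousAt f lv := hfc.continuousAt hIci
  have hgct : ContinuousAt g lv := hgc.continuousAt hIci
  set l := nhdsWithin lv (Set.Ioo lu lv) with hldef
  have hl : l ≤ nhds lv := nhdsWithin_le_nhds
  have hflv : Du < f lv := by
    rw [← hlu]; exact hfm hlu0.le (hlu0.trans hluv).le hluv
  set φl := f lv - Du with hφldef
  have hφl : 0 < φl := sub_pos.mpr hflv
  have htf : Tendsto f l (nhds (f lv)) := hfct.tendsto.mono_left hl
  have htg : Tendsto g l (nhds Dv) := by
    have := hgct.tendsto.mono_left hl
    rwa [hlv] at this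
  have htphi : Tendsto phi l (nhds φl) := by
    have : phi = fun S => f S - Du := funext hphi
    rw [this]; exact htf.sub_const Du
  have htpsi : Tendsto psi l (nhds 0) := by
    have : psi = fun S => g S - Dv := funext hpsi
    rw [this]
    simpa using htg.sub_const Dv
  have hmem : ∀ᶠ S in l, S ∈ Set.Ioo lu lv := self_mem_nhdsWithin
  have hpsi_neg : ∀ᶠ S in l, psi S < 0 := by
    filter_upwards [hmem] with S hS
    rw [hpsi, sub_neg, ← hlv]
    exact hgm (hlu0.trans hS.1).le hlv0.le hS.2
  have hphi_pos : ∀ᶠ S in l, 0 < phi S := by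
    filter_upwards [hmem] with S hS
    rw [hphi, sub_pos, ← hlu]
    exact hfm hlu0.le (hlu0.trans hS.1).le hS.1
  have htneg : Tendsto (fun S => -psi S) l (nhdsWithin 0 (Set.Ioi 0)) := by
    apply tendsto_nhdsWithin_iff.mpr
    constructor
    · simpa using htpsi.neg
    · filter_upwards [hpsi_neg] with S h
      exact Set.mem_Ioi.mpr (by linarith)
  have hinv : Tendsto (fun S => (psi S)⁻¹) l atBot := by
    have h1 : Tendsto (fun S => (-psi S)⁻¹) l atTop := tendsto_inv_nhdsGT_zero.comp htneg
    have h2 := tendsto_neg_atTop_atBot.comp h1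
    refine h2.congr fun S => ?_
    simp [inv_neg]
  -- the N part
  set N : ℝ → ℝ := fun S => (1/yv) * g S * (-(phi S)^2 * (psi S - b) / (a * (psi S - phi S))) with hNdef
  set L : ℝ := (1/yv) * Dv * (-φl^2 * (0 - b) / (a * (0 - φl))) with hLdef
  have hdenlim : a * (0 - φl) ≠ 0 := by
    have : a * (0 - φl) < 0 := mul_neg_of_pos_of_neg ha (by linarith)
    exact this.ne
  have htN : Tendsto N l (nhds L) := by
    apply Tendsto.mul ((tendsto_const_nhds.mul htg))
    exact Tendsto.div (((htphi.pow 2).neg).mul (htpsi.sub_const b))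
      (tendsto_const_nhds.mul (htpsi.sub htphi)) hdenlim
  have hL : L < 0 := by
    rw [hLdef]
    apply mul_neg_of_pos_of_neg
    · positivity
    · apply div_neg_of_pos_of_neg
      · nlinarith [pow_pos hφl 2]
      · exact mul_neg_of_pos_of_neg ha (by linarith)
  have htop : Tendsto (fun S => N S * (psi S)⁻¹) l atTop :=
    Tendsto.neg_mul_atBot hL htN hinv
  -- the A part
  set A : ℝ → ℝ := fun S => (1/yu) * f S * (phi S * (psi S - b) / (a * (psi S - phi S))) with hAdef
  have htA : Tendsto A l (nhds ((1/yu) * f lv * (φl * (0 - b) / (a * (0 - φl))))) := by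
    apply Tendsto.mul (tendsto_const_nhds.mul htf)
    exact Tendsto.div (htphi.mul (htpsi.sub_const b))
      (tendsto_const_nhds.mul (htpsi.sub htphi)) hdenlim
  have hsum : Tendsto (fun S => A S + N S * (psi S)⁻¹) l atTop :=
    htA.add_atTop htop
  apply hsum.congr'
  filter_upwards [hpsi_neg, hphi_pos] with S h1 h2
  have hps : psi S ≠ 0 := h1.ne
  have hdif : psi S - phi S ≠ 0 := by linarith
  simp only [hH, hU, hV, hNdef, hAdef, div_eq_mul_inv, mul_inv]
  ring
end

section
/- Under hypothesis (H1), if λ_u, λ_v and λ_b exist and λ_v < min(λ_u, λ_b), then H(S) tends to +∞ as S tends to λ_v from the right (i.e., along S ∈ (λ_v, min(λ_u, λ_b)) with S → λ_v). -/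
/-- Under (H1), if `lu`, `lv`, `lb` exist and
`lv < min lu lb`, then `H S → +∞` as `S → lv` from the right along
`(lv, min lu lb)`. -/
theorem H_tendsto_atTop_right_of_lv
    (f g : ℝ → ℝ) (D Sin a b yu yv Du Dv : ℝ)
    (hD : 0 < D) (hSin : 0 < Sin) (ha : 0 < a) (hb : 0 < b)
    (hyu : 0 < yu) (hyv : 0 < yv) (hDu : 0 < Du) (hDv : 0 < Dv)
    (hfC : ContDiffOn ℝ 1 f (Set.Ici 0)) (hgC : ContDiffOn ℝ 1 g (Set.Ici 0))
    (hf0 : f 0 = 0) (hg0 : g 0 = 0)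
    (hf' : ∀ S > (0:ℝ), 0 < deriv f S) (hg' : ∀ S > (0:ℝ), 0 < deriv g S)
    (phi psi U V H : ℝ → ℝ)
    (hphi : ∀ S, phi S = f S - Du) (hpsi : ∀ S, psi S = g S - Dv)
    (hU : ∀ S, U S = phi S * (psi S - b) / (a * (psi S - phi S)))
    (hV : ∀ S, V S = -((phi S)^2) * (psi S - b) / (a * (psi S - phi S) * psi S))
    (hH : ∀ S, H S = (1/yu) * f S * U S + (1/yv) * g S * V S)
    (lu lv lb : ℝ)
    (hlu0 : 0 < lu) (hlu : f lu = Du)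
    (hlv0 : 0 < lv) (hlv : g lv = Dv)
    (hlb0 : 0 < lb) (hlb : g lb = Dv + b)
    (hlvm : lv < min lu lb) :
    Filter.Tendsto H (nhdsWithin lv (Set.Ioo lv (min lu lb))) Filter.atTop := by
  set l := nhdsWithin lv (Set.Ioo lv (min lu lb)) with hldef
  have hfc : ContinuousOn f (Set.Ici 0) := hfC.continuousOn
  have hgc : ContinuousOn g (Set.Ici 0) := hgC.continuousOn
  have hfm : StrictMonoOn f (Set.Ici 0) := by
    apply strictMonoOn_of_deriv_pos (convex_Ici 0) hfc
    intro x hx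
    rw [interior_Ici] at hx
    exact hf' x hx
  have hgm : StrictMonoOn g (Set.Ici 0) := by
    apply strictMonoOn_of_deriv_pos (convex_Ici 0) hgc
    intro x hx
    rw [interior_Ici] at hx
    exact hg' x hx
  have hlvlu : lv < lu := lt_of_lt_of_le hlvm (min_le_left _ _)
  have hflv : f lv < Du := by
    rw [← hlu]; exact hfm hlv0.le hlu0.le hlvlu
  have hφ : phi lv < 0 := by rw [hphi]; linarith
  have hψ : psi lv = 0 := by rw [hpsi, hlv]; ring
  have hsub : Set.Ioo lv (min lu lb) ⊆ Set.Ici (0:ℝ) := by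
    intro x hx; exact (lt_trans hlv0 hx.1).le
  -- basic tendsto facts
  have hfl : Filter.Tendsto f l (nhds (f lv)) :=
    (hfc lv hlv0.le).mono_left (nhdsWithin_mono lv hsub)
  have hgl : Filter.Tendsto g l (nhds (g lv)) :=
    (hgc lv hlv0.le).mono_left (nhdsWithin_mono lv hsub)
  have hphil : Filter.Tendsto phi l (nhds (phi lv)) := by
    have : Filter.Tendsto (fun S => f S - Du) l (nhds (f lv - Du)) :=
      hfl.sub tendsto_const_nhds
    simpa [funext hphi, hphi lv] using this
  have hpsil : Filter.Tendsto psi l (nhds (psi lv)) := by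
    have : Filter.Tendsto (fun S => g S - Dv) l (nhds (g lv - Dv)) :=
      hgl.sub tendsto_const_nhds
    simpa [funext hpsi, hpsi lv] using this
  have hdenne : a * (psi lv - phi lv) ≠ 0 := by
    have : 0 < a * (psi lv - phi lv) := by
      apply mul_pos ha; rw [hψ]; linarith
    exact this.ne'
  have hden : Filter.Tendsto (fun S => a * (psi S - phi S)) l
      (nhds (a * (psi lv - phi lv))) :=
    tendsto_const_nhds.mul (hpsil.sub hphil)
  -- the bounded part
  have hA : Filter.Tendsto (fun S => (1/yu) * f S * U S) l
      (nhds ((1/yu) * f lv * (phi lv * (psi lv - b) / (a * (psi lv - phi lv))))) := by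
    have : Filter.Tendsto
        (fun S => (1/yu) * f S * (phi S * (psi S - b) / (a * (psi S - phi S)))) l
        (nhds ((1/yu) * f lv * (phi lv * (psi lv - b) / (a * (psi lv - phi lv))))) :=
      (tendsto_const_nhds.mul hfl).mul
        (((hphil.mul (hpsil.sub tendsto_const_nhds)).div hden hdenne))
    exact this.congr (fun S => by rw [hU])
  -- the exploding part
  set W : ℝ → ℝ := fun S => (1/yv) * g S * (-((phi S)^2) * (psi S - b) / (a * (psi S - phi S)))
    with hWdef
  set LW : ℝ := (1/yv) * g lv * (-((phi lv)^2) * (psi lv - b) / (a * (psi lv - phi lv)))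
    with hLWdef
  have hW : Filter.Tendsto W l (nhds LW) :=
    (tendsto_const_nhds.mul hgl).mul
      ((((hphil.pow 2).neg).mul (hpsil.sub tendsto_const_nhds)).div hden hdenne)
  have hLWpos : 0 < LW := by
    rw [hLWdef, hψ, hlv]
    have hφne : phi lv ≠ 0 := hφ.ne
    have h1 : 0 < -((phi lv)^2) * (0 - b) := by
      nlinarith [mul_pos (neg_pos.2 hφ) (neg_pos.2 hφ)]
    have h2 : 0 < a * (0 - phi lv) := by apply mul_pos ha; linarith
    have := div_pos h1 h2
    have h3 : 0 < (1/yv) * Dv := by positivity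
    nlinarith [mul_pos h3 this]
  have hpsi0 : Filter.Tendsto psi l (nhdsWithin 0 (Set.Ioi 0)) := by
    rw [tendsto_nhdsWithin_iff]
    constructor
    · rwa [hψ] at hpsil
    · filter_upwards [self_mem_nhdsWithin] with S hS
      have hS0 : (0:ℝ) < S := lt_trans hlv0 hS.1
      have : g lv < g S := hgm hlv0.le hS0.le hS.1
      rw [hpsi]; rw [hlv] at this; simpa using this
  have hinv : Filter.Tendsto (fun S => (psi S)⁻¹) l Filter.atTop :=
    hpsi0.inv_tendsto_nhdsGT_zero
  have hB : Filter.Tendsto (fun S => W S * (psi S)⁻¹) l Filter.atTop :=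
    Filter.Tendsto.pos_mul_atTop hLWpos hW hinv
  have hsplit : ∀ S, -((phi S)^2) * (psi S - b) / (a * (psi S - phi S) * psi S)
      = -((phi S)^2) * (psi S - b) / (a * (psi S - phi S)) * (psi S)⁻¹ := by
    intro S
    rw [← div_div, div_eq_mul_inv]
  have hkey : ∀ S, H S = (1/yu) * f S * U S + W S * (psi S)⁻¹ := by
    intro S
    rw [hH, hV, hsplit S, hWdef]
    ring
  have := hA.add_atTop hB
  exact this.congr (fun S => (hkey S).symm)
end

section
/- Under hypothesis (H1), if λ_u and λ_v exist, λ_u < λ_v, and S_in > λ_u, then there exists S* ∈ (λ_u, λ_v) such that D(S_in − S*) = H(S*); consequently (S*, U(S*), V(S*)) is an equilibrium of the model with U(S*) > 0 and V(S*) > 0. -/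
set_option maxHeartbeats 1000000

open Filter Set Topology

/-- Under (H1), if `lu < lv` and `Sin > lu`, there exists
`S' ∈ (lu, lv)` with `D (Sin - S') = H S'`; consequently
`(S', U S', V S')` is an equilibrium of the model with `U S' > 0` and
`V S' > 0`. -/
theorem exists_positive_equilibrium_case_lu_lt_lv
    (f g : ℝ → ℝ) (D Sin a b yu yv Du Dv : ℝ)
    (hD : 0 < D) (hSin : 0 < Sin) (ha : 0 < a) (hb : 0 < b)
    (hyu : 0 < yu) (hyv : 0 < yv) (hDu : 0 < Du) (hDv : 0 < Dv)
    (hfC : ContDiffOn ℝ 1 f (Set.Ici 0)) (hgC : ContDiffOn ℝ 1 g (Set.Ici 0))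
    (hf0 : f 0 = 0) (hg0 : g 0 = 0)
    (hf' : ∀ S > (0:ℝ), 0 < deriv f S) (hg' : ∀ S > (0:ℝ), 0 < deriv g S)
    (phi psi U V H : ℝ → ℝ)
    (hphi : ∀ S, phi S = f S - Du) (hpsi : ∀ S, psi S = g S - Dv)
    (hU : ∀ S, U S = phi S * (psi S - b) / (a * (psi S - phi S)))
    (hV : ∀ S, V S = -((phi S)^2) * (psi S - b) / (a * (psi S - phi S) * psi S))
    (hH : ∀ S, H S = (1/yu) * f S * U S + (1/yv) * g S * V S)
    (lu lv : ℝ)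
    (hlu0 : 0 < lu) (hlu : f lu = Du)
    (hlv0 : 0 < lv) (hlv : g lv = Dv)
    (hluv : lu < lv) (hSinlu : lu < Sin) :
    ∃ S' ∈ Set.Ioo lu lv,
      D * (Sin - S') = H S' ∧
      0 < U S' ∧ 0 < V S' ∧
      D * (Sin - S') - (1/yu) * f S' * U S' - (1/yv) * g S' * V S' = 0 ∧
      (f S' - Du) * U S' - a * (U S' + V S') * U S' + b * V S' = 0 ∧
      (g S' - Dv) * V S' + a * (U S' + V S') * U S' - b * V S' = 0 := by
  simp only [hphi, hpsi] at hU hV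
  have hfmono : StrictMonoOn f (Set.Ici 0) :=
    strictMonoOn_of_deriv_pos (convex_Ici 0) hfC.continuousOn
      (by rw [interior_Ici]; exact fun x hx => hf' x hx)
  have hgmono : StrictMonoOn g (Set.Ici 0) :=
    strictMonoOn_of_deriv_pos (convex_Ici 0) hgC.continuousOn
      (by rw [interior_Ici]; exact fun x hx => hg' x hx)
  have hfgt : ∀ S, lu < S → Du < f S := by
    intro S h
    have := hfmono hlu0.le (by simp only [Set.mem_Ici]; linarith) h
    linarith [hlu ▸ this]
  have hglt : ∀ S, 0 ≤ S → S < lv → g S < Dv := by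
    intro S h0 h
    have := hgmono h0 hlv0.le h
    linarith [hlv ▸ this]
  have hglu : 0 < g lu := by
    have := hgmono (le_refl (0:ℝ)) hlu0.le hlu0
    linarith [hg0 ▸ this]
  have hflv : Du < f lv := hfgt lv hluv
  -- positivity of U and V on (lu, lv)
  have hUVpos : ∀ S ∈ Set.Ioo lu lv, 0 < U S ∧ 0 < V S := by
    intro S hS
    have h1 : Du < f S := hfgt S hS.1
    have h2 : g S < Dv := hglt S (by linarith [hS.1]) hS.2
    constructor
    · rw [hU S]
      apply div_pos_of_neg_of_neg
      · nlinarith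
      · nlinarith
    · rw [hV S]
      apply div_pos
      · nlinarith [sq_nonneg (f S - Du), mul_pos (sub_pos.2 h1) (sub_pos.2 h1)]
      · nlinarith [mul_pos (mul_pos ha (by linarith : (0:ℝ) < (f S - Du) - (g S - Dv)))
          (by linarith : (0:ℝ) < Dv - g S)]
  -- filter setup at lv from the left
  have hmemIoo : ∀ᶠ S in 𝓝[<] lv, S ∈ Set.Ioo lu lv :=
    Ioo_mem_nhdsLT_of_mem ⟨hluv, le_rfl⟩
  have hfct : Tendsto f (𝓝[<] lv) (𝓝 (f lv)) :=
    (hfC.continuousOn lv hlv0.le).mono_of_mem_nhdsWithin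
      (mem_nhdsWithin_of_mem_nhds (Ici_mem_nhds hlv0))
  have hgct : Tendsto g (𝓝[<] lv) (𝓝 (g lv)) :=
    (hgC.continuousOn lv hlv0.le).mono_of_mem_nhdsWithin
      (mem_nhdsWithin_of_mem_nhds (Ici_mem_nhds hlv0))
  have hnum : Tendsto (fun S => -((f S - Du)^2) * ((g S - Dv) - b)) (𝓝[<] lv)
      (𝓝 (-((f lv - Du)^2) * ((g lv - Dv) - b))) :=
    (((hfct.sub tendsto_const_nhds).pow 2).neg).mul
      ((hgct.sub tendsto_const_nhds).sub tendsto_const_nhds)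
  have hnumpos : 0 < -((f lv - Du)^2) * ((g lv - Dv) - b) := by
    have h1 : g lv - Dv = 0 := by rw [hlv]; ring
    rw [h1]
    nlinarith [mul_pos (sub_pos.2 hflv) (sub_pos.2 hflv)]
  have hden0 : Tendsto (fun S => a * ((g S - Dv) - (f S - Du)) * (g S - Dv))
      (𝓝[<] lv) (𝓝 0) := by
    have h1 : Tendsto (fun S => a * ((g S - Dv) - (f S - Du)) * (g S - Dv)) (𝓝[<] lv)
        (𝓝 (a * ((g lv - Dv) - (f lv - Du)) * (g lv - Dv))) :=
      (tendsto_const_nhds.mul ((hgct.sub tendsto_const_nhds).sub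
        (hfct.sub tendsto_const_nhds))).mul (hgct.sub tendsto_const_nhds)
    simpa [hlv] using h1
  have hdenpos : ∀ᶠ S in 𝓝[<] lv,
      a * ((g S - Dv) - (f S - Du)) * (g S - Dv) ∈ Set.Ioi (0:ℝ) := by
    filter_upwards [hmemIoo] with S hS
    have h1 : Du < f S := hfgt S hS.1
    have h2 : g S < Dv := hglt S (by linarith [hS.1]) hS.2
    have : 0 < a * ((g S - Dv) - (f S - Du)) * (g S - Dv) := by
      nlinarith [mul_pos (mul_pos ha (by linarith : (0:ℝ) < (f S - Du) - (g S - Dv)))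
        (by linarith : (0:ℝ) < Dv - g S)]
    exact this
  have hdentd : Tendsto (fun S => a * ((g S - Dv) - (f S - Du)) * (g S - Dv))
      (𝓝[<] lv) (𝓝[>] 0) :=
    tendsto_nhdsWithin_iff.mpr ⟨hden0, hdenpos⟩
  have hVtop : Tendsto V (𝓝[<] lv) atTop := by
    have h1 : Tendsto (fun S => (a * ((g S - Dv) - (f S - Du)) * (g S - Dv))⁻¹)
        (𝓝[<] lv) atTop := tendsto_inv_nhdsGT_zero.comp hdentd
    have h2 := Filter.Tendsto.pos_mul_atTop hnumpos hnum h1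
    exact h2.congr fun S => ((hV S).trans (div_eq_mul_inv _ _)).symm
  have hHtop : Tendsto H (𝓝[<] lv) atTop := by
    have hconst : Tendsto (fun S => (1/yv * g lu) * V S) (𝓝[<] lv) atTop :=
      hVtop.const_mul_atTop (by positivity)
    refine tendsto_atTop_mono' _ ?_ hconst
    filter_upwards [hmemIoo] with S hS
    obtain ⟨hUp, hVp⟩ := hUVpos S hS
    have hfS : Du < f S := hfgt S hS.1
    have hgS : g lu < g S := hgmono hlu0.le (by simp only [Set.mem_Ici]; linarith [hS.1]) hS.1
    rw [hH S]
    have hfpos : 0 < f S := lt_trans hDu hfS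
    have h1 : 0 ≤ (1/yu) * f S * U S :=
      le_of_lt (mul_pos (mul_pos (by positivity) hfpos) hUp)
    have h2 : (1/yv * g lu) * V S ≤ (1/yv) * g S * V S := by
      have hyv' : 0 < (1:ℝ)/yv := by positivity
      nlinarith [mul_pos (sub_pos.2 hgS) hVp, mul_pos hyv' (mul_pos (sub_pos.2 hgS) hVp)]
    linarith
  -- find S₁ with D * Sin < H S₁
  have hev : ∀ᶠ S in 𝓝[<] lv, S ∈ Set.Ioo lu lv ∧ D * Sin < H S :=
    hmemIoo.and (hHtop.eventually_gt_atTop (D * Sin))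
  obtain ⟨S₁, hS₁mem, hS₁H⟩ := hev.exists
  -- continuity of the gap function on [lu, S₁]
  have hsub : Set.Icc lu S₁ ⊆ Set.Ici (0:ℝ) := fun x hx => le_trans hlu0.le hx.1
  have cf : ContinuousOn f (Set.Icc lu S₁) := hfC.continuousOn.mono hsub
  have cg : ContinuousOn g (Set.Icc lu S₁) := hgC.continuousOn.mono hsub
  have hIccne : ∀ S ∈ Set.Icc lu S₁,
      (a * ((g S - Dv) - (f S - Du)) ≠ 0) ∧ (g S - Dv ≠ 0) := by
    intro S hS
    have h1 : Du ≤ f S := by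
      rcases eq_or_lt_of_le hS.1 with h | h
      · rw [← h, hlu]
      · exact (hfgt S h).le
    have h2 : g S < Dv := hglt S (le_trans hlu0.le hS.1) (lt_of_le_of_lt hS.2 hS₁mem.2)
    constructor
    · have : a * ((g S - Dv) - (f S - Du)) < 0 := by nlinarith
      exact ne_of_lt this
    · exact ne_of_lt (by linarith)
  have cU : ContinuousOn U (Set.Icc lu S₁) := by
    have h1 : ContinuousOn (fun S => (f S - Du) * ((g S - Dv) - b) /
        (a * ((g S - Dv) - (f S - Du)))) (Set.Icc lu S₁) := by
      apply ContinuousOn.div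
      · exact (cf.sub continuousOn_const).mul ((cg.sub continuousOn_const).sub continuousOn_const)
      · exact continuousOn_const.mul ((cg.sub continuousOn_const).sub (cf.sub continuousOn_const))
      · exact fun S hS => (hIccne S hS).1
    exact h1.congr fun S _ => hU S
  have cV : ContinuousOn V (Set.Icc lu S₁) := by
    have h1 : ContinuousOn (fun S => -((f S - Du)^2) * ((g S - Dv) - b) /
        (a * ((g S - Dv) - (f S - Du)) * (g S - Dv))) (Set.Icc lu S₁) := by
      apply ContinuousOn.div
      · exact (((cf.sub continuousOn_const).pow 2).neg).mul
          ((cg.sub continuousOn_const).sub continuousOn_const)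
      · exact (continuousOn_const.mul ((cg.sub continuousOn_const).sub
          (cf.sub continuousOn_const))).mul (cg.sub continuousOn_const)
      · exact fun S hS => mul_ne_zero (hIccne S hS).1 (hIccne S hS).2
    exact h1.congr fun S _ => hV S
  have cH : ContinuousOn H (Set.Icc lu S₁) := by
    have h1 : ContinuousOn (fun S => (1/yu) * f S * U S + (1/yv) * g S * V S)
        (Set.Icc lu S₁) :=
      ((continuousOn_const.mul cf).mul cU).add ((continuousOn_const.mul cg).mul cV)
    exact h1.congr fun S _ => hH S
  have cF : ContinuousOn (fun S => D * (Sin - S) - H S) (Set.Icc lu S₁) :=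
    (continuousOn_const.mul (continuousOn_const.sub continuousOn_id)).sub cH
  -- endpoint values
  have hUlu : U lu = 0 := by rw [hU lu, hlu]; simp
  have hVlu : V lu = 0 := by rw [hV lu, hlu]; simp
  have hFlu : 0 < D * (Sin - lu) - H lu := by
    rw [hH lu, hUlu, hVlu]
    have : 0 < D * (Sin - lu) := mul_pos hD (by linarith)
    simp only [mul_zero, add_zero]
    linarith
  have hFS₁ : D * (Sin - S₁) - H S₁ < 0 := by
    have h1 : 0 < D * S₁ := mul_pos hD (lt_trans hlu0 hS₁mem.1)
    nlinarith
  -- intermediate value theorem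
  have hIVT := intermediate_value_Ioo' hS₁mem.1.le cF
  have h0mem : (0:ℝ) ∈ Set.Ioo ((fun S => D * (Sin - S) - H S) S₁)
      ((fun S => D * (Sin - S) - H S) lu) := ⟨hFS₁, hFlu⟩
  obtain ⟨S', hS'mem, hFS'⟩ := hIVT h0mem
  have hS'Ioo : S' ∈ Set.Ioo lu lv := ⟨hS'mem.1, lt_trans hS'mem.2 hS₁mem.2⟩
  obtain ⟨hUp, hVp⟩ := hUVpos S' hS'Ioo
  simp only at hFS'
  have heq : D * (Sin - S') = H S' := by linarith [hFS']
  have h1 : Du < f S' := hfgt S' hS'Ioo.1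
  have h2 : g S' < Dv := hglt S' (by linarith [hS'Ioo.1]) hS'Ioo.2
  have hd1 : (g S' - Dv) - (f S' - Du) ≠ 0 := ne_of_lt (by linarith)
  have hd2 : g S' - Dv ≠ 0 := ne_of_lt (by linarith)
  refine ⟨S', hS'Ioo, heq, hUp, hVp, ?_, ?_, ?_⟩
  · rw [hH S'] at heq; linarith
  · rw [hU S', hV S']
    field_simp
    ring
  · rw [hU S', hV S']
    field_simp
    ring
end

section
/- Under hypothesis (H1), if λ_u, λ_v and λ_b exist, λ_v < λ_BP where λ_BP = min(λ_u, λ_b), and S_in > λ_BP, then there exists S* ∈ (λ_v, λ_BP) such that D(S_in − S*) = H(S*); consequently (S*, U(S*), V(S*)) is an equilibrium of the model with U(S*) > 0 and V(S*) > 0. -/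
set_option maxHeartbeats 1000000 in
/-- Under (H1), if `lv < min lu lb` and `Sin > min lu lb`, there
exists `S' ∈ (lv, min lu lb)` with `D (Sin - S') = H S'`; consequently
`(S', U S', V S')` is an equilibrium of the model with `U S' > 0` and
`V S' > 0`. -/
theorem exists_positive_equilibrium_case_lv_lt_lBP
    (f g : ℝ → ℝ) (D Sin a b yu yv Du Dv : ℝ)
    (hD : 0 < D) (hSin : 0 < Sin) (ha : 0 < a) (hb : 0 < b)
    (hyu : 0 < yu) (hyv : 0 < yv) (hDu : 0 < Du) (hDv : 0 < Dv)
    (hfC : ContDiffOn ℝ 1 f (Set.Ici 0)) (hgC : ContDiffOn ℝ 1 g (Set.Ici 0))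
    (hf0 : f 0 = 0) (hg0 : g 0 = 0)
    (hf' : ∀ S > (0:ℝ), 0 < deriv f S) (hg' : ∀ S > (0:ℝ), 0 < deriv g S)
    (phi psi U V H : ℝ → ℝ)
    (hphi : ∀ S, phi S = f S - Du) (hpsi : ∀ S, psi S = g S - Dv)
    (hU : ∀ S, U S = phi S * (psi S - b) / (a * (psi S - phi S)))
    (hV : ∀ S, V S = -((phi S)^2) * (psi S - b) / (a * (psi S - phi S) * psi S))
    (hH : ∀ S, H S = (1/yu) * f S * U S + (1/yv) * g S * V S)
    (lu lv lb : ℝ)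
    (hlu0 : 0 < lu) (hlu : f lu = Du)
    (hlv0 : 0 < lv) (hlv : g lv = Dv)
    (hlb0 : 0 < lb) (hlb : g lb = Dv + b)
    (hlvm : lv < min lu lb) (hSinm : min lu lb < Sin) :
    ∃ S' ∈ Set.Ioo lv (min lu lb),
      D * (Sin - S') = H S' ∧
      0 < U S' ∧ 0 < V S' ∧
      D * (Sin - S') - (1/yu) * f S' * U S' - (1/yv) * g S' * V S' = 0 ∧
      (f S' - Du) * U S' - a * (U S' + V S') * U S' + b * V S' = 0 ∧
      (g S' - Dv) * V S' + a * (U S' + V S') * U S' - b * V S' = 0 := by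
  set m := min lu lb with hm
  have hm0 : 0 < m := lt_min hlu0 hlb0
  have hmu : m ≤ lu := min_le_left _ _
  have hmb : m ≤ lb := min_le_right _ _
  -- strict monotonicity
  have hfm : StrictMonoOn f (Set.Ici (0:ℝ)) :=
    strictMonoOn_of_deriv_pos (convex_Ici 0) hfC.continuousOn
      (by rw [interior_Ici]; exact fun x hx => hf' x hx)
  have hgm : StrictMonoOn g (Set.Ici (0:ℝ)) :=
    strictMonoOn_of_deriv_pos (convex_Ici 0) hgC.continuousOn
      (by rw [interior_Ici]; exact fun x hx => hg' x hx)
  have hsub : Set.Icc lv m ⊆ Set.Ici (0:ℝ) := fun x hx => le_trans hlv0.le hx.1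
  -- sign facts on Icc lv m
  have hpsi_nonneg : ∀ S ∈ Set.Icc lv m, 0 ≤ g S - Dv := by
    intro S hS
    have := hgm.le_iff_le (Set.mem_Ici.2 hlv0.le) (hsub hS)
    have : g lv ≤ g S := (hgm.le_iff_le (Set.mem_Ici.2 hlv0.le) (hsub hS)).2 hS.1
    linarith [hlv ▸ this]
  have hphi_nonpos : ∀ S ∈ Set.Icc lv m, f S - Du ≤ 0 := by
    intro S hS
    have : f S ≤ f lu := (hfm.le_iff_le (hsub hS) (Set.mem_Ici.2 hlu0.le)).2
      (le_trans hS.2 hmu)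
    linarith [hlu ▸ this]
  have hden : ∀ S ∈ Set.Icc lv m, 0 < (g S - Dv) - (f S - Du) := by
    intro S hS
    rcases lt_or_eq_of_le hS.1 with h | h
    · have h1 : g lv < g S := hgm (Set.mem_Ici.2 hlv0.le) (hsub hS) h
      have h2 := hphi_nonpos S hS
      rw [hlv] at h1; linarith
    · have h1 : f lv < f lu := hfm (Set.mem_Ici.2 hlv0.le) (Set.mem_Ici.2 hlu0.le)
        (lt_of_lt_of_le hlvm hmu)
      rw [hlu] at h1
      have h2 := hpsi_nonneg S hS
      rw [← h] at *
      linarith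
  have hdenne : ∀ S ∈ Set.Icc lv m, a * ((g S - Dv) - (f S - Du)) ≠ 0 := by
    intro S hS; exact ne_of_gt (mul_pos ha (hden S hS))
  -- the auxiliary function G
  set G : ℝ → ℝ := fun S =>
    (g S - Dv) * (D * (Sin - S))
      - (g S - Dv) * ((1/yu) * f S *
          ((f S - Du) * ((g S - Dv) - b) / (a * ((g S - Dv) - (f S - Du)))))
      - (1/yv) * g S *
          (-((f S - Du)^2) * ((g S - Dv) - b) / (a * ((g S - Dv) - (f S - Du))))
    with hG
  have hfc : ContinuousOn f (Set.Icc lv m) := hfC.continuousOn.mono hsub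
  have hgc : ContinuousOn g (Set.Icc lv m) := hgC.continuousOn.mono hsub
  have hGc : ContinuousOn G (Set.Icc lv m) := by
    apply ContinuousOn.sub
    apply ContinuousOn.sub
    · exact (hgc.sub continuousOn_const).mul
        (continuousOn_const.mul (continuousOn_const.sub continuousOn_id))
    · exact (hgc.sub continuousOn_const).mul
        ((continuousOn_const.mul hfc).mul
          (((hfc.sub continuousOn_const).mul
            ((hgc.sub continuousOn_const).sub continuousOn_const)).div
            (continuousOn_const.mul
              ((hgc.sub continuousOn_const).sub (hfc.sub continuousOn_const)))
            hdenne))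
    · exact (continuousOn_const.mul hgc).mul
        (((((hfc.sub continuousOn_const).pow 2).neg).mul
          ((hgc.sub continuousOn_const).sub continuousOn_const)).div
          (continuousOn_const.mul
            ((hgc.sub continuousOn_const).sub (hfc.sub continuousOn_const)))
          hdenne)
  -- G lv < 0
  have hflv : f lv - Du < 0 := by
    have : f lv < f lu := hfm (Set.mem_Ici.2 hlv0.le) (Set.mem_Ici.2 hlu0.le)
      (lt_of_lt_of_le hlvm hmu)
    rw [hlu] at this; linarith
  have hGlv : G lv < 0 := by
    have hd : 0 < a * ((0:ℝ) - (f lv - Du)) := mul_pos ha (by linarith)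
    have hsq : 0 < (f lv - Du)^2 := by
      nlinarith [mul_pos_of_neg_of_neg hflv hflv]
    have hW : 0 < -((f lv - Du)^2) * ((0:ℝ) - b) / (a * ((0:ℝ) - (f lv - Du))) :=
      div_pos (by nlinarith) hd
    have hGeq : G lv = -((1/yv) * Dv *
        (-((f lv - Du)^2) * ((0:ℝ) - b) / (a * ((0:ℝ) - (f lv - Du))))) := by
      simp only [hG]; rw [hlv]; ring
    rw [hGeq]
    have hpos : 0 < (1/yv) * Dv := by positivity
    nlinarith
  -- G m > 0
  have hGm : 0 < G m := by
    have hpsim : 0 < g m - Dv := by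
      have : g lv < g m := hgm (Set.mem_Ici.2 hlv0.le) (Set.mem_Ici.2 hm0.le) hlvm
      rw [hlv] at this; linarith
    have hnum0 : (f m - Du) * ((g m - Dv) - b) = 0 := by
      rcases min_cases lu lb with ⟨h1, h2⟩ | ⟨h1, h2⟩
      · rw [hm, h1, hlu]; ring
      · rw [hm, h1, hlb]; ring
    have hnum0' : -((f m - Du)^2) * ((g m - Dv) - b) = 0 := by
      rcases min_cases lu lb with ⟨h1, h2⟩ | ⟨h1, h2⟩
      · rw [hm, h1, hlu]; ring
      · rw [hm, h1, hlb]; ring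
    have hGeq : G m = (g m - Dv) * (D * (Sin - m)) := by
      simp only [hG]
      rw [hnum0, hnum0']
      simp only [zero_div, mul_zero, sub_zero, zero_mul]
    rw [hGeq]
    exact mul_pos hpsim (mul_pos hD (by linarith))
  -- IVT
  have hIVT := intermediate_value_Ioo (le_of_lt hlvm) hGc
  have h0mem : (0:ℝ) ∈ Set.Ioo (G lv) (G m) := ⟨hGlv, hGm⟩
  obtain ⟨S', hS'mem, hGS'⟩ := hIVT h0mem
  refine ⟨S', hS'mem, ?_⟩
  obtain ⟨hS'l, hS'r⟩ := hS'mem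
  have hS'Icc : S' ∈ Set.Icc lv m := ⟨hS'l.le, hS'r.le⟩
  have hq0 : 0 < g S' - Dv := by
    have : g lv < g S' := hgm (Set.mem_Ici.2 hlv0.le) (hsub hS'Icc) hS'l
    rw [hlv] at this; linarith
  have hp0 : f S' - Du < 0 := by
    have : f S' < f lu := hfm (hsub hS'Icc) (Set.mem_Ici.2 hlu0.le)
      (lt_of_lt_of_le hS'r hmu)
    rw [hlu] at this; linarith
  have hqb : (g S' - Dv) - b < 0 := by
    have : g S' < g lb := hgm (hsub hS'Icc) (Set.mem_Ici.2 hlb0.le)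
      (lt_of_lt_of_le hS'r hmb)
    rw [hlb] at this; linarith
  have hd0 : 0 < a * ((g S' - Dv) - (f S' - Du)) := mul_pos ha (by linarith)
  have hdne : a * ((g S' - Dv) - (f S' - Du)) ≠ 0 := ne_of_gt hd0
  have hqne : g S' - Dv ≠ 0 := ne_of_gt hq0
  have hUval : U S' = (f S' - Du) * ((g S' - Dv) - b)
      / (a * ((g S' - Dv) - (f S' - Du))) := by rw [hU, hphi, hpsi]
  have hVval : V S' = -((f S' - Du)^2) * ((g S' - Dv) - b)
      / (a * ((g S' - Dv) - (f S' - Du)) * (g S' - Dv)) := by rw [hV, hphi, hpsi]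
  have hUpos : 0 < U S' := by
    rw [hUval]
    exact div_pos (mul_pos_of_neg_of_neg hp0 hqb) hd0
  have hVpos : 0 < V S' := by
    rw [hVval]
    apply div_pos
    · have hsq : 0 < (f S' - Du)^2 := by
        nlinarith [mul_pos_of_neg_of_neg hp0 hp0]
      nlinarith
    · exact mul_pos hd0 hq0
  have hGe : (g S' - Dv) * (D * (Sin - S'))
      - (g S' - Dv) * ((1/yu) * f S' *
          ((f S' - Du) * ((g S' - Dv) - b) / (a * ((g S' - Dv) - (f S' - Du)))))
      - (1/yv) * g S' *
          (-((f S' - Du)^2) * ((g S' - Dv) - b)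
            / (a * ((g S' - Dv) - (f S' - Du)))) = 0 := hGS'
  have hqV : (g S' - Dv) * V S' = -((f S' - Du)^2) * ((g S' - Dv) - b)
      / (a * ((g S' - Dv) - (f S' - Du))) := by
    rw [hVval]; field_simp
  have key : (g S' - Dv) * (D * (Sin - S') - H S') = 0 := by
    rw [hH]
    have hexp : (g S' - Dv) * (D * (Sin - S')
        - ((1/yu) * f S' * U S' + (1/yv) * g S' * V S'))
      = (g S' - Dv) * (D * (Sin - S'))
        - (g S' - Dv) * ((1/yu) * f S' * U S')
        - (1/yv) * g S' * ((g S' - Dv) * V S') := by ring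
    rw [hexp, hqV, hUval]
    exact hGe
  have hmain : D * (Sin - S') = H S' := by
    rcases mul_eq_zero.1 key with h | h
    · exact absurd h hqne
    · linarith
  refine ⟨hmain, hUpos, hVpos, by rw [hH] at hmain; linarith, ?_, ?_⟩
  · rw [hUval, hVval]
    field_simp
    ring
  · rw [hUval, hVval]
    field_simp
    ring
end

section
/- Under hypothesis (H1), every equilibrium (S*, u*, v*) of the model with u* > 0 and v* > 0 satisfies 0 < S* < S_in. -/
/-- Under (H1), every equilibrium `(S', u', v')` of the model
with `u' > 0` and `v' > 0` satisfies `0 < S' < Sin`. -/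
theorem positive_equilibrium_substrate_bounds
    (f g : ℝ → ℝ) (D Sin a b yu yv Du Dv : ℝ)
    (hD : 0 < D) (hSin : 0 < Sin) (ha : 0 < a) (hb : 0 < b)
    (hyu : 0 < yu) (hyv : 0 < yv) (hDu : 0 < Du) (hDv : 0 < Dv)
    (hfC : ContDiffOn ℝ 1 f (Set.Ici 0)) (hgC : ContDiffOn ℝ 1 g (Set.Ici 0))
    (hf0 : f 0 = 0) (hg0 : g 0 = 0)
    (hf' : ∀ S > (0:ℝ), 0 < deriv f S) (hg' : ∀ S > (0:ℝ), 0 < deriv g S)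
    (S' u' v' : ℝ) (hS' : 0 ≤ S') (hu' : 0 < u') (hv' : 0 < v')
    (heq1 : D * (Sin - S') - (1/yu) * f S' * u' - (1/yv) * g S' * v' = 0)
    (heq2 : (f S' - Du) * u' - a * (u' + v') * u' + b * v' = 0)
    (heq3 : (g S' - Dv) * v' + a * (u' + v') * u' - b * v' = 0) :
    0 < S' ∧ S' < Sin := by
  have hsum : (f S' - Du) * u' + (g S' - Dv) * v' = 0 := by linarith
  have hSpos : 0 < S' := by
    rcases hS'.lt_or_eq with h | h
    · exact h
    · exfalso
      rw [← h] at hsum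
      rw [hf0, hg0] at hsum
      nlinarith
  have hmono : StrictMonoOn f (Set.Icc 0 S') := by
    apply strictMonoOn_of_deriv_pos (convex_Icc 0 S')
    · exact hfC.continuousOn.mono Set.Icc_subset_Ici_self
    · intro x hx
      rw [interior_Icc] at hx
      exact hf' x hx.1
  have hgmono : StrictMonoOn g (Set.Icc 0 S') := by
    apply strictMonoOn_of_deriv_pos (convex_Icc 0 S')
    · exact hgC.continuousOn.mono Set.Icc_subset_Ici_self
    · intro x hx
      rw [interior_Icc] at hx
      exact hg' x hx.1
  have hfpos : 0 < f S' := by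
    have := hmono (Set.left_mem_Icc.mpr hS') (Set.right_mem_Icc.mpr hS') hSpos
    rwa [hf0] at this
  have hgpos : 0 < g S' := by
    have := hgmono (Set.left_mem_Icc.mpr hS') (Set.right_mem_Icc.mpr hS') hSpos
    rwa [hg0] at this
  refine ⟨hSpos, ?_⟩
  have h1 : 0 < (1/yu) * f S' * u' := by positivity
  have h2 : 0 < (1/yv) * g S' * v' := by positivity
  nlinarith
end

section
/- Under hypothesis (H1), let (S*, u*, v*) be a positive equilibrium of the model, i.e., S* ∈ I, u* = U(S*) > 0, v* = V(S*) > 0 and D(S_in − S*) = H(S*). Then every complex eigenvalue of the Jacobian matrix J of the model at (S*, u*, v*) has negative real part if and only if c3 > 0 and c4 > 0, where c3 and c4 = c1 c2 − c3 are the Routh–Hurwitz coefficients evaluated at (S*, u*, v*). -/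
open Matrix Polynomial Complex


lemma realCase (x1 x2 x3 : ℝ) (hs : x1 + x2 + x3 < 0) :
    (x1 < 0 ∧ x2 < 0 ∧ x3 < 0) ↔
      (x1*x2*x3 < 0 ∧ (x1+x2)*(x2+x3)*(x3+x1) < 0) := by
  constructor
  · rintro ⟨h1, h2, h3⟩
    constructor
    · nlinarith [mul_pos (mul_pos (neg_pos.mpr h1) (neg_pos.mpr h2)) (neg_pos.mpr h3)]
    · nlinarith [mul_pos (mul_pos (by linarith : (0:ℝ) < -(x1+x2)) (by linarith : (0:ℝ) < -(x2+x3))) (by linarith : (0:ℝ) < -(x3+x1))]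
  · rintro ⟨hp, hq⟩
    by_contra hcon
    push_neg at hcon
    have hx1 : x1 ≠ 0 := by rintro rfl; simp at hp
    have hx2 : x2 ≠ 0 := by rintro rfl; simp at hp
    have hx3 : x3 ≠ 0 := by rintro rfl; simp at hp
    rcases lt_or_gt_of_ne hx1 with h1 | h1
    · rcases lt_or_gt_of_ne hx2 with h2 | h2
      · rcases lt_or_gt_of_ne hx3 with h3 | h3
        · linarith [hcon h1 h2]
        · nlinarith [mul_pos (mul_pos (neg_pos.mpr h1) (neg_pos.mpr h2)) h3]
      · rcases lt_or_gt_of_ne hx3 with h3 | h3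
        · nlinarith [mul_pos (mul_pos (neg_pos.mpr h1) h2) (neg_pos.mpr h3)]
        · nlinarith [mul_pos (mul_pos (by linarith : (0:ℝ) < -(x1+x2)) (by linarith : (0:ℝ) < x2+x3)) (by linarith : (0:ℝ) < -(x3+x1))]
    · rcases lt_or_gt_of_ne hx2 with h2 | h2
      · rcases lt_or_gt_of_ne hx3 with h3 | h3
        · nlinarith [mul_pos (mul_pos h1 (neg_pos.mpr h2)) (neg_pos.mpr h3)]
        · nlinarith [mul_pos (mul_pos (by linarith : (0:ℝ) < -(x1+x2)) (by linarith : (0:ℝ) < -(x2+x3))) (by linarith : (0:ℝ) < x3+x1)]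
      · rcases lt_or_gt_of_ne hx3 with h3 | h3
        · nlinarith [mul_pos (mul_pos (by linarith : (0:ℝ) < x1+x2) (by linarith : (0:ℝ) < -(x2+x3))) (by linarith : (0:ℝ) < -(x3+x1))]
        · nlinarith [mul_pos (mul_pos h1 h2) h3]

lemma pairCase (p q x : ℝ) :
    (p < 0 ∧ x < 0) ↔
      (0 < -(p^2+q^2)*x ∧ 0 < -2*p*((p+x)^2+q^2)) := by
  constructor
  · rintro ⟨h1, h2⟩
    constructor
    · nlinarith [mul_pos (show (0:ℝ) < p^2+q^2 by nlinarith [sq_nonneg q]) (neg_pos.mpr h2)]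
    · nlinarith [mul_pos (show (0:ℝ) < (p+x)^2+q^2 by nlinarith [sq_nonneg q]) (by linarith : (0:ℝ) < -2*p)]
  · rintro ⟨h1, h2⟩
    constructor
    · nlinarith [sq_nonneg q, sq_nonneg (p+x)]
    · nlinarith [sq_nonneg p, sq_nonneg q]




lemma pairC (c1 c2 c3 : ℝ) (z w x : ℂ) (hw : w = (starRingEnd ℂ) z)
    (V1 : z + w + x = -(c1:ℂ)) (V2 : z*w + z*x + w*x = (c2:ℂ))
    (V3 : z*w*x = -(c3:ℂ)) :
    ((z.re < 0 ∧ w.re < 0 ∧ x.re < 0) ↔ (0 < c3 ∧ 0 < c1*c2 - c3)) := by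
  have hxim : x.im = 0 := by
    have := congrArg Complex.im V1
    simpa [hw] using this
  have hx : x = (x.re : ℂ) := Complex.ext (by simp) (by simp [hxim])
  have e1 : 2*z.re + x.re = -c1 := by
    have := congrArg Complex.re V1
    simp [hw] at this
    linarith
  rw [hw, hx] at V2 V3
  have e2 : z.re^2 + z.im^2 + 2*z.re*x.re = c2 := by
    have := congrArg Complex.re V2
    simp [Complex.mul_re, Complex.conj_re, Complex.conj_im] at this
    linear_combination this
  have e3 : (z.re^2 + z.im^2) * x.re = -c3 := by
    have := congrArg Complex.re V3
    simp [Complex.mul_re, Complex.mul_im, Complex.conj_re, Complex.conj_im] at this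
    linear_combination this
  have hc1' : c1 = -(2*z.re + x.re) := by linarith
  have hc2' : c2 = z.re^2 + z.im^2 + 2*z.re*x.re := by linarith
  have hc3' : c3 = -(z.re^2+z.im^2)*x.re := by linarith
  have hc4' : c1*c2 - c3 = -2*z.re*((z.re+x.re)^2+z.im^2) := by
    rw [hc1', hc2', hc3']; ring
  have hwre : w.re = z.re := by rw [hw]; simp
  rw [hc4', hc3', hwre, and_self_left]
  exact pairCase z.re z.im x.re

lemma realC (c1 c2 c3 : ℝ) (hc1 : 0 < c1) (r1 r2 r3 : ℂ)
    (h1 : r1.im = 0) (h2 : r2.im = 0) (h3 : r3.im = 0)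
    (V1 : r1 + r2 + r3 = -(c1:ℂ)) (V2 : r1*r2 + r1*r3 + r2*r3 = (c2:ℂ))
    (V3 : r1*r2*r3 = -(c3:ℂ)) :
    ((r1.re < 0 ∧ r2.re < 0 ∧ r3.re < 0) ↔ (0 < c3 ∧ 0 < c1*c2 - c3)) := by
  rw [show r1 = (r1.re : ℂ) from Complex.ext (by simp) (by simp [h1]),
      show r2 = (r2.re : ℂ) from Complex.ext (by simp) (by simp [h2]),
      show r3 = (r3.re : ℂ) from Complex.ext (by simp) (by simp [h3])] at V1 V2 V3
  have e1 : r1.re + r2.re + r3.re = -c1 := by exact_mod_cast V1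
  have e2 : r1.re*r2.re + r1.re*r3.re + r2.re*r3.re = c2 := by exact_mod_cast V2
  have e3 : r1.re*r2.re*r3.re = -c3 := by exact_mod_cast V3
  have hc3' : (0 < c3) ↔ r1.re*r2.re*r3.re < 0 := by constructor <;> intro <;> linarith
  have hc4' : c1*c2 - c3 = -((r1.re+r2.re)*(r2.re+r3.re)*(r3.re+r1.re)) := by
    have a1 : c1 = -(r1.re + r2.re + r3.re) := by linarith
    have a3 : c3 = -(r1.re*r2.re*r3.re) := by linarith
    rw [a1, ← e2, a3]; ring
  rw [hc3', hc4', neg_pos]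
  exact realCase r1.re r2.re r3.re (by linarith)

lemma cubic_factor (b c d : ℂ) :
    ∃ r1 r2 r3 : ℂ, ∀ μ : ℂ, μ^3 + b*μ^2 + c*μ + d = (μ - r1) * (μ - r2) * (μ - r3) := by
  have hdeg : (X^3 + C b * X^2 + C c * X + C d : ℂ[X]).degree = 3 := by
    compute_degree!
  obtain ⟨r1, hr1⟩ := IsAlgClosed.exists_root (k := ℂ) (X^3 + C b * X^2 + C c * X + C d) (by rw [hdeg]; norm_num)
  have hr1' : r1^3 + b*r1^2 + c*r1 + d = 0 := by
    simpa [IsRoot] using hr1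
  have hdeg2 : (X^2 + C (b + r1) * X + C (c + b*r1 + r1^2) : ℂ[X]).degree = 2 := by
    compute_degree!
  obtain ⟨r2, hr2⟩ := IsAlgClosed.exists_root (k := ℂ) (X^2 + C (b + r1) * X + C (c + b*r1 + r1^2)) (by rw [hdeg2]; norm_num)
  have hr2' : r2^2 + (b + r1)*r2 + (c + b*r1 + r1^2) = 0 := by
    simpa [IsRoot] using hr2
  refine ⟨r1, r2, -(b + r1) - r2, fun μ => ?_⟩
  linear_combination (μ - r1) * hr2' + hr1'

lemma cubicRH (c1 c2 c3 : ℝ) (hc1 : 0 < c1) :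
    (∀ μ : ℂ, μ^3 + (c1:ℂ)*μ^2 + (c2:ℂ)*μ + (c3:ℂ) = 0 → μ.re < 0) ↔
      (0 < c3 ∧ 0 < c1*c2 - c3) := by
  obtain ⟨r1, r2, r3, F⟩ := cubic_factor (c1:ℂ) (c2:ℂ) (c3:ℂ)
  -- Vieta
  have h0 := F 0
  have h1 := F 1
  have h2 := F (-1)
  have V1 : r1 + r2 + r3 = -(c1:ℂ) := by linear_combination (h1 + h2)/2 - h0
  have V2 : r1*r2 + r1*r3 + r2*r3 = (c2:ℂ) := by linear_combination (h2 - h1)/2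
  have V3 : r1*r2*r3 = -(c3:ℂ) := by linear_combination h0
  -- roots description
  have hiff : (∀ μ : ℂ, μ^3 + (c1:ℂ)*μ^2 + (c2:ℂ)*μ + (c3:ℂ) = 0 → μ.re < 0)
      ↔ (r1.re < 0 ∧ r2.re < 0 ∧ r3.re < 0) := by
    constructor
    · intro h
      refine ⟨h r1 (by rw [F]; ring), h r2 (by rw [F]; ring), h r3 (by rw [F]; ring)⟩
    · rintro ⟨g1, g2, g3⟩ μ hμ
      rw [F μ] at hμ
      rcases mul_eq_zero.mp hμ with h | h
      · rcases mul_eq_zero.mp h with h | h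
        · rw [sub_eq_zero.mp h]; exact g1
        · rw [sub_eq_zero.mp h]; exact g2
      · rw [sub_eq_zero.mp h]; exact g3
  rw [hiff]
  -- conjugate closure
  have conjroot : ∀ r : ℂ, (r - r1) * (r - r2) * (r - r3) = 0 →
      ((starRingEnd ℂ) r - r1) * ((starRingEnd ℂ) r - r2) * ((starRingEnd ℂ) r - r3) = 0 := by
    intro r hr
    have hroot : r^3 + (c1:ℂ)*r^2 + (c2:ℂ)*r + (c3:ℂ) = 0 := by rw [F r]; exact hr
    have := congrArg (starRingEnd ℂ) hroot
    simp only [_root_.map_add, _root_.map_mul, map_pow, Complex.conj_ofReal, _root_.map_zero] at this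
    rw [F ((starRingEnd ℂ) r)] at this
    exact this
  have hcj1 : (starRingEnd ℂ) r1 = r1 ∨ (starRingEnd ℂ) r1 = r2 ∨ (starRingEnd ℂ) r1 = r3 := by
    have := conjroot r1 (by ring)
    rcases mul_eq_zero.mp this with h | h
    · rcases mul_eq_zero.mp h with h | h
      · exact Or.inl (sub_eq_zero.mp h)
      · exact Or.inr (Or.inl (sub_eq_zero.mp h))
    · exact Or.inr (Or.inr (sub_eq_zero.mp h))
  have hcj2 : (starRingEnd ℂ) r2 = r1 ∨ (starRingEnd ℂ) r2 = r2 ∨ (starRingEnd ℂ) r2 = r3 := by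
    have := conjroot r2 (by ring)
    rcases mul_eq_zero.mp this with h | h
    · rcases mul_eq_zero.mp h with h | h
      · exact Or.inl (sub_eq_zero.mp h)
      · exact Or.inr (Or.inl (sub_eq_zero.mp h))
    · exact Or.inr (Or.inr (sub_eq_zero.mp h))
  rcases hcj1 with hA | hA | hA
  · -- r1 real
    have h1im : r1.im = 0 := by
      have := congrArg Complex.im hA
      simp at this
      linarith
    rcases hcj2 with hB | hB | hB
    · -- conj r2 = r1, so r2 = conj r1 = r1 real
      have h2im : r2.im = 0 := by
        have := congrArg Complex.im hB
        simp at this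
        linarith [h1im]
      have h3im : r3.im = 0 := by
        have := congrArg Complex.im V1
        simp [h1im, h2im] at this
        exact this
      exact realC c1 c2 c3 hc1 r1 r2 r3 h1im h2im h3im V1 V2 V3
    · -- r2 real
      have h2im : r2.im = 0 := by
        have := congrArg Complex.im hB
        simp at this
        linarith
      have h3im : r3.im = 0 := by
        have := congrArg Complex.im V1
        simp [h1im, h2im] at this
        exact this
      exact realC c1 c2 c3 hc1 r1 r2 r3 h1im h2im h3im V1 V2 V3
    · -- r3 = conj r2 : pair (r2, r3), r1 real
      have hiff2 := pairC c1 c2 c3 r2 r3 r1 hB.symm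
        (by linear_combination V1) (by linear_combination V2) (by linear_combination V3)
      rw [show (r1.re < 0 ∧ r2.re < 0 ∧ r3.re < 0) ↔ (r2.re < 0 ∧ r3.re < 0 ∧ r1.re < 0) by tauto]
      exact hiff2
  · -- r2 = conj r1 : pair (r1, r2), r3 third
    exact pairC c1 c2 c3 r1 r2 r3 hA.symm V1 V2 V3
  · -- r3 = conj r1 : pair (r1, r3), r2 third
    have hiff2 := pairC c1 c2 c3 r1 r3 r2 hA.symm
      (by linear_combination V1) (by linear_combination V2) (by linear_combination V3)
    rw [show (r1.re < 0 ∧ r2.re < 0 ∧ r3.re < 0) ↔ (r1.re < 0 ∧ r3.re < 0 ∧ r2.re < 0) by tauto]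
    exact hiff2

set_option maxHeartbeats 1000000 in
/-- Under (H1), at a positive equilibrium `(S', u', v')`
(`S' ∈ I`, `u' = U S' > 0`, `v' = V S' > 0`, `D (Sin - S') = H S'`), all
complex eigenvalues of the Jacobian matrix `J` at `(S', u', v')` have negative
real part iff `c3 > 0` and `c4 > 0`, where `c4 = c1 c2 - c3`. -/
theorem positive_equilibrium_stability_iff_RouthHurwitz
    (f g : ℝ → ℝ) (D Sin a b yu yv Du Dv : ℝ)
    (hD : 0 < D) (hSin : 0 < Sin) (ha : 0 < a) (hb : 0 < b)
    (hyu : 0 < yu) (hyv : 0 < yv) (hDu : 0 < Du) (hDv : 0 < Dv)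
    (hfC : ContDiffOn ℝ 1 f (Set.Ici 0)) (hgC : ContDiffOn ℝ 1 g (Set.Ici 0))
    (hf0 : f 0 = 0) (hg0 : g 0 = 0)
    (hf' : ∀ S > (0:ℝ), 0 < deriv f S) (hg' : ∀ S > (0:ℝ), 0 < deriv g S)
    (phi psi U V H : ℝ → ℝ)
    (hphi : ∀ S, phi S = f S - Du) (hpsi : ∀ S, psi S = g S - Dv)
    (hU : ∀ S, U S = phi S * (psi S - b) / (a * (psi S - phi S)))
    (hV : ∀ S, V S = -((phi S)^2) * (psi S - b) / (a * (psi S - phi S) * psi S))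
    (hH : ∀ S, H S = (1/yu) * f S * U S + (1/yv) * g S * V S)
    (lu lv lb : ℝ)
    (hlu0 : 0 < lu) (hlu : f lu = Du)
    (hlv0 : 0 < lv) (hlv : g lv = Dv)
    (hlb0 : 0 < lb) (hlb : g lb = Dv + b)
    (S' u' v' : ℝ)
    (hS'I : if lu < lv then lu < S' ∧ S' < lv else lv < S' ∧ S' < min lu lb)
    (hu' : u' = U S') (hu'pos : 0 < u')
    (hv' : v' = V S') (hv'pos : 0 < v')
    (heq : D * (Sin - S') = H S')
    (m11 m12 m13 m21 m22 a23 m31 m32 m33 c1 c2 c3 c4 : ℝ)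
    (hm11 : m11 = D + deriv f S' * u' / yu + deriv g S' * v' / yv)
    (hm12 : m12 = f S' / yu) (hm13 : m13 = g S' / yv)
    (hm21 : m21 = deriv f S' * u') (hm22 : m22 = a * (2*u' + v') - phi S')
    (ha23 : a23 = b - a * u')
    (hm31 : m31 = deriv g S' * v') (hm32 : m32 = a * (2*u' + v'))
    (hm33 : m33 = b - a * u' - psi S')
    (hc1 : c1 = m11 + m22 + m33)
    (hc2 : c2 = m12*m21 + m13*m31 - m32*a23 + m11*m22 + m11*m33 + m22*m33)
    (hc3 : c3 = m11*(m22*m33 - m32*a23) + m21*(m12*m33 + m32*m13)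
              + m31*(m12*a23 + m13*m22))
    (hc4 : c4 = c1 * c2 - c3)
    (J : Matrix (Fin 3) (Fin 3) ℝ)
    (hJ : J = !![-m11, -m12, -m13; m21, -m22, a23; m31, m32, -m33]) :
    (∀ μ : ℂ, μ ∈ spectrum ℂ (J.map (algebraMap ℝ ℂ)) → μ.re < 0) ↔
      (0 < c3 ∧ 0 < c4) := by
  -- positivity of S'
  have hS'pos : 0 < S' := by
    split_ifs at hS'I with h
    · linarith [hS'I.1]
    · linarith [hS'I.1]
  have hf'S := hf' S' hS'pos
  have hg'S := hg' S' hS'pos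
  -- m11 > 0
  have hm11pos : 0 < m11 := by
    rw [hm11]
    have h1 := div_pos (mul_pos hf'S hu'pos) hyu
    have h2 := div_pos (mul_pos hg'S hv'pos) hyv
    linarith
  -- denominators nonzero
  have hUS := hU S'
  have hVS := hV S'
  rw [hUS] at hu'
  rw [hVS] at hv'
  have hk : a * (psi S' - phi S') ≠ 0 := by
    intro h
    rw [h, div_zero] at hu'
    linarith
  have hQ : psi S' ≠ 0 := by
    intro h
    rw [h, mul_zero, div_zero] at hv'
    linarith
  have hden2 : a * (psi S' - phi S') * psi S' ≠ 0 := mul_ne_zero hk hQ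
  rw [eq_div_iff hk] at hu'
  rw [eq_div_iff hden2] at hv'
  -- equilibrium identities
  have eq3 : v' * psi S' + phi S' * u' = 0 := by
    have key : (v' * psi S' + phi S' * u') * (a * (psi S' - phi S')) = 0 := by
      linear_combination hv' + phi S' * hu'
    rcases mul_eq_zero.mp key with h | h
    · exact h
    · exact absurd h hk
  have E2 : psi S' * v' + a * (u' + v') * u' - b * v' = 0 := by
    have key : (psi S' * v' + a * (u' + v') * u' - b * v') * psi S' = 0 := by
      linear_combination (psi S' + a * u' - b) * eq3 + u' * hu'
    rcases mul_eq_zero.mp key with h | h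
    · exact h
    · exact absurd h hQ
  have E1 : phi S' * u' - a * (u' + v') * u' + b * v' = 0 := by
    linear_combination eq3 - E2
  -- m22, m33 positive
  have hm22pos : 0 < m22 := by
    have h : m22 * u' = a * u' ^ 2 + b * v' := by
      rw [hm22]; linear_combination -E1
    have hpos : 0 < m22 * u' := by
      rw [h]; positivity
    exact (mul_pos_iff_of_pos_right hu'pos).mp hpos
  have hm33pos : 0 < m33 := by
    have h : m33 * v' = a * u' ^ 2 := by
      rw [hm33]; linear_combination -E2
    have hpos : 0 < m33 * v' := by
      rw [h]; positivity
    exact (mul_pos_iff_of_pos_right hv'pos).mp hpos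
  have hc1pos : 0 < c1 := by rw [hc1]; linarith
  -- spectrum characterization
  have key : ∀ μ : ℂ, μ ∈ spectrum ℂ (J.map (algebraMap ℝ ℂ)) ↔
      μ^3 + (c1:ℂ)*μ^2 + (c2:ℂ)*μ + (c3:ℂ) = 0 := by
    intro μ
    rw [spectrum.mem_iff, Matrix.isUnit_iff_isUnit_det, isUnit_iff_ne_zero, not_ne_iff]
    have hdet : (algebraMap ℂ (Matrix (Fin 3) (Fin 3) ℂ) μ - J.map (algebraMap ℝ ℂ)).det
        = μ^3 + (c1:ℂ)*μ^2 + (c2:ℂ)*μ + (c3:ℂ) := by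
      rw [hJ, Matrix.det_fin_three]
      simp [Matrix.algebraMap_matrix_apply, Matrix.map_apply, hc1, hc2, hc3]
      ring
    rw [hdet]
  have main := cubicRH c1 c2 c3 hc1pos
  constructor
  · intro h
    have := main.mp (fun μ hμ => h μ ((key μ).mpr hμ))
    exact ⟨this.1, by rw [hc4]; exact this.2⟩
  · rintro ⟨g3, g4⟩ μ hμ
    rw [hc4] at g4
    exact main.mpr ⟨g3, g4⟩ μ ((key μ).mp hμ)
end

section
/- Let c1, c2, c3 be real numbers. All complex roots of the cubic polynomial z³ + c1 z² + c2 z + c3 have negative real part if and only if c1 > 0, c3 > 0 and c1 c2 > c3 (the Routh–Hurwitz criterion for a cubic). -/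
/-- Every monic real cubic has a real root. -/
lemma cubic_real_root (c1 c2 c3 : ℝ) : ∃ r : ℝ, r^3 + c1*r^2 + c2*r + c3 = 0 := by
  have hcont : Continuous fun x : ℝ => x^3 + c1*x^2 + c2*x + c3 := by continuity
  set M := 1 + |c1| + |c2| + |c3| with hM
  have hM1 : 1 ≤ M := by
    have := abs_nonneg c1; have := abs_nonneg c2; have := abs_nonneg c3; linarith
  have hpos : 0 < M^3 + c1*M^2 + c2*M + c3 := by
    nlinarith [abs_nonneg c1, abs_nonneg c2, abs_nonneg c3, neg_abs_le c1, le_abs_self c1,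
      neg_abs_le c2, le_abs_self c2, neg_abs_le c3, le_abs_self c3, sq_nonneg M]
  have hneg : (-M)^3 + c1*(-M)^2 + c2*(-M) + c3 < 0 := by
    nlinarith [abs_nonneg c1, abs_nonneg c2, abs_nonneg c3, neg_abs_le c1, le_abs_self c1,
      neg_abs_le c2, le_abs_self c2, neg_abs_le c3, le_abs_self c3, sq_nonneg M]
  have hsub := intermediate_value_Icc (by linarith : -M ≤ M) hcont.continuousOn
  have h0 : (0:ℝ) ∈ Set.Icc ((-M)^3 + c1*(-M)^2 + c2*(-M) + c3) (M^3 + c1*M^2 + c2*M + c3) :=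
    ⟨le_of_lt hneg, le_of_lt hpos⟩
  obtain ⟨r, _, hr⟩ := hsub h0
  exact ⟨r, hr⟩

/-- Roots of a monic quadratic with positive coefficients have negative real part. -/
lemma quad_neg_re (b c : ℝ) (hb : 0 < b) (hc : 0 < c) (z : ℂ)
    (hz : z^2 + (b:ℂ)*z + (c:ℂ) = 0) : z.re < 0 := by
  obtain ⟨x, y⟩ := z
  have h1 : x^2 - y^2 + b*x + c = 0 := by
    have := congrArg Complex.re hz
    simpa [pow_two, Complex.mul_re, Complex.mul_im] using this
  have h2 : y * (2*x + b) = 0 := by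
    have := congrArg Complex.im hz
    simp [pow_two, Complex.mul_re, Complex.mul_im] at this
    linarith
  show x < 0
  rcases mul_eq_zero.mp h2 with hy | hx
  · subst hy; nlinarith
  · nlinarith

/-- Converse: if all complex roots of a monic real quadratic have negative real part,
then its coefficients are positive. -/
lemma quad_coeff_pos (b c : ℝ) (h : ∀ z : ℂ, z^2 + (b:ℂ)*z + (c:ℂ) = 0 → z.re < 0) :
    0 < b ∧ 0 < c := by
  rcases le_or_gt 0 (b^2 - 4*c) with hD | hD
  · set s := Real.sqrt (b^2 - 4*c) with hs
    have hs2 : s^2 = b^2 - 4*c := Real.sq_sqrt hD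
    have hsnn : 0 ≤ s := Real.sqrt_nonneg _
    have r1 : ((-b + s)/2)^2 + b*((-b+s)/2) + c = 0 := by nlinarith [hs2]
    have r2 : ((-b - s)/2)^2 + b*((-b-s)/2) + c = 0 := by nlinarith [hs2]
    have h1 : (-b + s)/2 < 0 := by
      have := h ((-b + s)/2 : ℝ) (by exact_mod_cast congrArg (Complex.ofReal) r1)
      simpa using this
    have h2 : (-b - s)/2 < 0 := by
      have := h ((-b - s)/2 : ℝ) (by exact_mod_cast congrArg (Complex.ofReal) r2)
      simpa using this
    exact ⟨by linarith, by nlinarith [mul_pos (neg_pos.mpr h1) (neg_pos.mpr h2)]⟩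
  · set s := Real.sqrt (4*c - b^2) with hs
    have hs2 : s^2 = 4*c - b^2 := Real.sq_sqrt (by linarith)
    refine ⟨?_, by nlinarith [sq_nonneg b]⟩
    have hroot : (⟨-b/2, s/2⟩ : ℂ)^2 + (b:ℂ)*(⟨-b/2, s/2⟩ : ℂ) + (c:ℂ) = 0 := by
      apply Complex.ext <;>
        simp [pow_two, Complex.mul_re, Complex.mul_im] <;> nlinarith [hs2]
    have := h _ hroot
    simp at this
    linarith

/-- Routh–Hurwitz criterion for a cubic: all complex roots of
`z³ + c1 z² + c2 z + c3` have negative real part iff `c1 > 0`, `c3 > 0` and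
`c1 c2 > c3`. -/
theorem routh_hurwitz_cubic (c1 c2 c3 : ℝ) :
    (∀ z : ℂ, z^3 + (c1 : ℂ) * z^2 + (c2 : ℂ) * z + (c3 : ℂ) = 0 → z.re < 0) ↔
      (0 < c1 ∧ 0 < c3 ∧ c3 < c1 * c2) := by
  obtain ⟨r, hr⟩ := cubic_real_root c1 c2 c3
  set b := c1 + r with hbdef
  set c := c2 + r*c1 + r^2 with hcdef
  have hc3 : c3 = -r * c := by rw [hcdef]; linear_combination hr
  -- factorization over ℂ
  have hfact : ∀ z : ℂ, z^3 + (c1 : ℂ) * z^2 + (c2 : ℂ) * z + (c3 : ℂ)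
      = (z - r) * (z^2 + (b:ℂ)*z + (c:ℂ)) := by
    intro z
    have hc3' : (c3 : ℂ) = -(r:ℂ) * (c:ℂ) := by exact_mod_cast congrArg Complex.ofReal hc3
    rw [hc3', hbdef, hcdef]
    push_cast
    ring
  have hrC : ((r:ℂ))^3 + (c1 : ℂ) * (r:ℂ)^2 + (c2 : ℂ) * (r:ℂ) + (c3 : ℂ) = 0 := by
    exact_mod_cast congrArg Complex.ofReal hr
  have idc : c1*c2 - c3 = b*(c - r*c1) := by rw [hc3, hbdef, hcdef]; ring
  constructor
  · intro h
    have hrneg : r < 0 := by simpa using h r hrC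
    have hq : ∀ z : ℂ, z^2 + (b:ℂ)*z + (c:ℂ) = 0 → z.re < 0 := by
      intro z hz
      apply h z
      rw [hfact z, hz, mul_zero]
    obtain ⟨hb, hc⟩ := quad_coeff_pos b c hq
    refine ⟨by rw [hbdef] at hb; linarith, by nlinarith [hc3], ?_⟩
    nlinarith [mul_pos hb (show 0 < c - r*c1 by nlinarith)]
  · rintro ⟨h1, h3, h13⟩
    have hrneg : r < 0 := by
      rcases lt_trichotomy r 0 with h | h | h
      · exact h
      · exfalso; rw [h] at hc3; simp at hc3; linarith
      · exfalso
        have hcneg : c < 0 := by nlinarith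
        have hbpos : 0 < b := by rw [hbdef]; linarith
        nlinarith [mul_pos hbpos (show 0 < r*c1 - c by nlinarith)]
    have hcpos : 0 < c := by nlinarith
    have hbpos : 0 < b := by
      by_contra hb
      push_neg at hb
      have : c - r*c1 > 0 := by nlinarith
      nlinarith
    intro z hz
    rw [hfact z] at hz
    rcases mul_eq_zero.mp hz with h0 | h0
    · have : z = (r:ℂ) := by linear_combination h0
      rw [this]; simpa using hrneg
    · exact quad_neg_re b c hbpos hcpos z h0
end
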